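/- arXiv:2210.08687 — 2 statements merged into one kernel-verified Lean document; each statement's English description precedes it below -/
import Mathlib

section
/- In P₀²(ℝ³) with coordinates (x,y,z), for every conic neighborhood of the z-axis there is a constant c > 0 such that |x²| + |y² − xz| > c·(x² + y² + z²) for all (x,y,z) outside that conic neighborhood. Consequently, for the ideal I generated by x² and y² − xz, Allow(I) ⊆ {(0,0,1), (0,0,−1)}. -/
open scoped BigOperators
open MvPolynomial

noncomputable section

abbrev En (n : ℕ) : Type := EuclideanSpace ℝ (Fin n)

/-- Evaluation of a polynomial at a point of ℝⁿ. -/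
def evalP {n : ℕ} (p : MvPolynomial (Fin n) ℝ) (x : En n) : ℝ :=
  MvPolynomial.eval (fun i => x i) p

/-- Truncation of a polynomial to degree ≤ m. -/
def trunc {n : ℕ} (m : ℕ) (p : MvPolynomial (Fin n) ℝ) : MvPolynomial (Fin n) ℝ :=
  ∑ d ∈ p.support,
    if (d.sum fun _ k => k) ≤ m then MvPolynomial.monomial d (p.coeff d) else 0

/-- `p` is the m-jet (m-th degree Taylor polynomial at the origin) of `F`. -/
def IsJet {n : ℕ} (m : ℕ) (F : En n → ℝ) (p : MvPolynomial (Fin n) ℝ) : Prop :=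
  p.totalDegree ≤ m ∧
    ∀ k : ℕ, k ≤ m → iteratedFDeriv ℝ k (fun x => F x - evalP p x) 0 = 0

/-- `I^m(E)`: m-jets at the origin of `C^m` functions vanishing on `E`. -/
def Im {n : ℕ} (m : ℕ) (E : Set (En n)) : Set (MvPolynomial (Fin n) ℝ) :=
  { p | ∃ F : En n → ℝ, ContDiff ℝ (m : ℕ∞) F ∧ (∀ x ∈ E, F x = 0) ∧ IsJet m F p }

/-- First-order partial derivative in the i-th coordinate direction. -/
def pderivE {n : ℕ} (i : Fin n) (F : En n → ℝ) : En n → ℝ :=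
  fun x => fderiv ℝ F x (EuclideanSpace.single i 1)

/-- Iterated partial derivative ∂^α. -/
def pdMulti {n : ℕ} (α : Fin n → ℕ) (F : En n → ℝ) : En n → ℝ :=
  (List.finRange n).foldr (fun i G => (pderivE i)^[α i] G) F

/-- |α|, the order of a multi-index. -/
def mIdeg {n : ℕ} (α : Fin n → ℕ) : ℕ := ∑ i, α i

/-- The cone `Γ(Ω,δ,r)` around a set `Ω` of directions. -/
def coneS {n : ℕ} (Ω : Set (En n)) (δ r : ℝ) : Set (En n) :=
  { x | 0 < ‖x‖ ∧ ‖x‖ < r ∧ ∃ ω ∈ Ω, ‖(‖x‖⁻¹ • x) - ω‖ < δ }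

/-- The cone `Γ(ω,δ,r)` around a single direction. -/
def cone {n : ℕ} (ω : En n) (δ r : ℝ) : Set (En n) := coneS {ω} δ r

/-- `ω` is a forbidden direction of the family `I`. -/
def Forbidden {n : ℕ} (m : ℕ) (I : Set (MvPolynomial (Fin n) ℝ)) (ω : En n) : Prop :=
  ∃ (L : ℕ) (p : Fin L → MvPolynomial (Fin n) ℝ), (∀ l, p l ∈ I) ∧
    ∃ c > 0, ∃ δ > 0, ∃ r > 0, ∀ x ∈ cone ω δ r, c * ‖x‖ ^ m < ∑ l, |evalP (p l) x|

/-- `ω` is an allowed direction of `I`. -/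
def Allowed {n : ℕ} (m : ℕ) (I : Set (MvPolynomial (Fin n) ℝ)) (ω : En n) : Prop :=
  ¬ Forbidden m I ω

/-- The set of allowed directions of `I` in the unit sphere. -/
def AllowSet {n : ℕ} (m : ℕ) (I : Set (MvPolynomial (Fin n) ℝ)) : Set (En n) :=
  { ω | ‖ω‖ = 1 ∧ Allowed m I ω }

/-- `E` is tangent to the direction `ω` at the origin. -/
def Tangent {n : ℕ} (E : Set (En n)) (ω : En n) : Prop :=
  ∀ δ > 0, ∀ r > 0, (E ∩ cone ω δ r).Nonempty

/-- `I` is an ideal in the ring `P₀^m(ℝⁿ)` of m-jets with vanishing constant term,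
with jet (truncated) multiplication. -/
def IsJetIdeal {n : ℕ} (m : ℕ) (I : Set (MvPolynomial (Fin n) ℝ)) : Prop :=
  (∀ p ∈ I, p.totalDegree ≤ m ∧ p.coeff 0 = 0) ∧
    (0 : MvPolynomial (Fin n) ℝ) ∈ I ∧
    (∀ p ∈ I, ∀ q ∈ I, p + q ∈ I) ∧
    ∀ p ∈ I, ∀ q : MvPolynomial (Fin n) ℝ, q.totalDegree ≤ m → trunc m (p * q) ∈ I

/-- The ideal of `P₀^m(ℝⁿ)` generated by a set of jets. -/
def jetSpan {n : ℕ} (m : ℕ) (s : Set (MvPolynomial (Fin n) ℝ)) :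
    Set (MvPolynomial (Fin n) ℝ) :=
  ⋂₀ { I | IsJetIdeal m I ∧ s ⊆ I }

/-- The finite set of multi-indices of order ≤ k. -/
def multiIdxLe (n k : ℕ) : Finset (Fin n → ℕ) :=
  (Fintype.piFinset fun _ => Finset.range (k + 1)).filter fun γ => (∑ i, γ i) ≤ k

/-- The degree m−|α| Taylor sum `Σ_{|γ| ≤ m−|α|} (1/γ!) ∂^{α+γ}F(w) (v−w)^γ`. -/
def taylorSum {n : ℕ} (m : ℕ) (F : En n → ℝ) (α : Fin n → ℕ) (w v : En n) : ℝ :=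
  ∑ γ ∈ multiIdxLe n (m - mIdeg α),
    ((∏ i, Nat.factorial (γ i) : ℕ) : ℝ)⁻¹ * pdMulti (fun i => α i + γ i) F w *
      ∏ i, (v i - w i) ^ γ i

/-- `F` is m-negligible for `Ω` (on the open set `U`). -/
def NegligibleFor {n : ℕ} (m : ℕ) (U Ω : Set (En n)) (F : En n → ℝ) : Prop :=
  ∀ ε > 0, ∃ δ > 0, ∃ r > 0,
    coneS Ω δ r ⊆ U ∧
    (∀ x ∈ coneS Ω δ r, ∀ α : Fin n → ℕ, mIdeg α ≤ m →
      |pdMulti α F x| ≤ ε * ‖x‖ ^ (m - mIdeg α)) ∧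
    (∀ x ∈ coneS Ω δ r, ∀ y ∈ coneS Ω δ r, x ≠ y → ∀ α : Fin n → ℕ, mIdeg α ≤ m →
      |pdMulti α F x - taylorSum m F α y x| ≤ ε * ‖x - y‖ ^ (m - mIdeg α))

/-- `F` is Whitney-m-negligible for `Ω` (on the open set `U`). -/
def WhitneyNegligible {n : ℕ} (m : ℕ) (U Ω : Set (En n)) (F : En n → ℝ) : Prop :=
  ∀ ε > 0, ∃ δ > 0, ∃ r > 0, ∃ Fε : En n → ℝ,
    coneS Ω δ r ⊆ U ∧
    ContDiffOn ℝ (m : ℕ∞) Fε {x | x ≠ 0} ∧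
    (∀ x : En n, x ≠ 0 → ∀ α : Fin n → ℕ, mIdeg α ≤ m →
      |pdMulti α Fε x| ≤ ε * ‖x‖ ^ (m - mIdeg α)) ∧
    ∀ x ∈ coneS Ω δ r, Fε x = F x

/-- The dome `D(ω,δ)` of directions around `ω`. -/
def Dset {n : ℕ} (ω : En n) (δ : ℝ) : Set (En n) := { ω' | ‖ω'‖ = 1 ∧ ‖ω' - ω‖ < δ }

/-- The annulus `Ann_K(ρ)`. -/
def Ann {n : ℕ} (K ρ : ℝ) : Set (En n) := { x | ρ / K < ‖x‖ ∧ ‖x‖ < K * ρ }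

/-- `I` implies the jet `p`. -/
def JetImplies {n : ℕ} (m : ℕ) (I : Set (MvPolynomial (Fin n) ℝ))
    (p : MvPolynomial (Fin n) ℝ) : Prop :=
  ∃ A > 0, ∃ (L : ℕ) (Q : Fin L → MvPolynomial (Fin n) ℝ), (∀ l, Q l ∈ I) ∧
    ∀ ε > 0, ∃ δ > 0, ∃ r > 0, ∀ ρ : ℝ, 0 < ρ → ρ ≤ r →
      ∃ (F : En n → ℝ) (S : Fin L → En n → ℝ),
        ContDiffOn ℝ (m : ℕ∞) F (Ann (n := n) 4 ρ) ∧
        (∀ l, ContDiffOn ℝ (m : ℕ∞) (S l) (Ann (n := n) 4 ρ)) ∧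
        (∀ x ∈ Ann (n := n) 4 ρ, ∀ α : Fin n → ℕ, mIdeg α ≤ m →
          |pdMulti α F x| ≤ ε * ρ ^ (m - mIdeg α)) ∧
        (∀ l, ∀ x ∈ Ann (n := n) 4 ρ, ∀ α : Fin n → ℕ, mIdeg α ≤ m →
          |pdMulti α (S l) x| ≤ A / ρ ^ mIdeg α) ∧
        ∀ x ∈ Ann (n := n) 2 ρ, (∃ ω ∈ AllowSet m I, ‖(‖x‖⁻¹ • x) - ω‖ < δ) →
          evalP p x = F x + ∑ l, S l x * evalP (Q l) x

/-- The closure `cl(I)` of an ideal of jets: all jets in `P₀^m(ℝⁿ)` implied by `I`. -/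
def jetClosure {n : ℕ} (m : ℕ) (I : Set (MvPolynomial (Fin n) ℝ)) :
    Set (MvPolynomial (Fin n) ℝ) :=
  { p | p.totalDegree ≤ m ∧ p.coeff 0 = 0 ∧ JetImplies m I p }

/-- `I` strongly implies `p` in the direction `ω`. -/
def StronglyImpliesAt {n : ℕ} (m : ℕ) (I : Set (MvPolynomial (Fin n) ℝ)) (ω : En n)
    (p : MvPolynomial (Fin n) ℝ) : Prop :=
  ∃ δω > 0, ∃ rω > 0, ∃ (L : ℕ) (Q : Fin L → MvPolynomial (Fin n) ℝ),
    (∀ l, Q l ∈ I) ∧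
    ∃ (S : Fin L → En n → ℝ) (C : Fin L → ℝ) (F : En n → ℝ),
      ContDiffOn ℝ (m : ℕ∞) F (cone ω δω rω) ∧
      (∀ l, ContDiffOn ℝ (m : ℕ∞) (S l) (cone ω δω rω)) ∧
      NegligibleFor m (cone ω δω rω) (AllowSet m I ∩ Dset ω δω) F ∧
      (∀ l, 0 < C l ∧ ∀ x ∈ cone ω δω rω, ∀ α : Fin n → ℕ, mIdeg α ≤ m →
        |pdMulti α (S l) x| ≤ C l / ‖x‖ ^ mIdeg α) ∧
      ∀ x ∈ cone ω δω rω, evalP p x = (∑ l, S l x * evalP (Q l) x) + F x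

/-!
The function `|x²| + |y² − xz|` is continuous and homogeneous of degree 2, and on the unit sphere
it vanishes only at `±e₃`. Hence it has a positive minimum on the compact part of the sphere at
distance `≥ δ` from `±e₃`, and homogeneity turns this minimum into the bound `c‖v‖²`. A unit
direction `ω ≠ ±e₃` has a cone of directions staying at distance `≥ δ` from `±e₃`, on which the
two generators then witness that `ω` is forbidden.
-/

theorem exists_pos_mul_norm_pow_lt_of_homogeneous {E : Type*} [NormedAddCommGroup E]
    [NormedSpace ℝ E] [ProperSpace E] {f : E → ℝ} {k : ℕ} {S : Set E} (hS : IsClosed S)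
    (hf : Continuous f) (hhom : ∀ t : ℝ, 0 < t → ∀ v, f (t • v) = t ^ k * f v)
    (hpos : ∀ u ∈ S, ‖u‖ = 1 → 0 < f u) :
    ∃ c > 0, ∀ v : E, v ≠ 0 → ‖v‖⁻¹ • v ∈ S → c * ‖v‖ ^ k < f v := by
  obtain ⟨a, ha, hmin⟩ := ((isCompact_sphere (0 : E) 1).inter_right hS).exists_forall_le'
    hf.continuousOn (fun u hu => hpos u hu.2 (mem_sphere_zero_iff_norm.mp hu.1))
  refine ⟨a / 2, half_pos ha, fun v hv hvS => ?_⟩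
  have hnorm : 0 < ‖v‖ := norm_pos_iff.mpr hv
  have hunit : ‖v‖⁻¹ • v ∈ Metric.sphere (0 : E) 1 := by
    rw [mem_sphere_zero_iff_norm, norm_smul, norm_inv, norm_norm, inv_mul_cancel₀ hnorm.ne']
  have hscale : f v = ‖v‖ ^ k * f (‖v‖⁻¹ • v) := by
    rw [hhom _ (inv_pos.mpr hnorm), ← mul_assoc, ← mul_pow, mul_inv_cancel₀ hnorm.ne', one_pow,
      one_mul]
  calc a / 2 * ‖v‖ ^ k < a * ‖v‖ ^ k := by gcongr; linarith
    _ ≤ f (‖v‖⁻¹ • v) * ‖v‖ ^ k := by gcongr; exact hmin _ ⟨hunit, hvS⟩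
    _ = f v := by rw [hscale, mul_comm]

theorem le_norm_sub_of_norm_sub_lt {E : Type*} [SeminormedAddCommGroup E] {u ω e : E} {δ : ℝ}
    (hu : ‖u - ω‖ < δ) (hω : 2 * δ ≤ ‖ω - e‖) : δ ≤ ‖u - e‖ := by
  have := norm_sub_le_norm_sub_add_norm_sub ω u e
  rw [norm_sub_rev ω u] at this
  linarith

theorem subset_jetSpan {n m : ℕ} (s : Set (MvPolynomial (Fin n) ℝ)) : s ⊆ jetSpan m s :=
  fun _ hp => Set.mem_sInter.mpr fun _ hI => hI.2 hp

def genAbsSum (v : En 3) : ℝ := |v 0 ^ 2| + |v 1 ^ 2 - v 0 * v 2|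

theorem continuous_genAbsSum : Continuous genAbsSum := by
  unfold genAbsSum
  fun_prop

theorem genAbsSum_smul (t : ℝ) (v : En 3) : genAbsSum (t • v) = t ^ 2 * genAbsSum v := by
  have hsq : 0 ≤ t ^ 2 := sq_nonneg t
  simp only [genAbsSum, PiLp.smul_apply, smul_eq_mul]
  rw [show (t * v 0) ^ 2 = t ^ 2 * v 0 ^ 2 by ring,
    show (t * v 1) ^ 2 - t * v 0 * (t * v 2) = t ^ 2 * (v 1 ^ 2 - v 0 * v 2) by ring,
    abs_mul, abs_mul, abs_of_nonneg hsq, mul_add]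

theorem eq_single_two_or_eq_neg_of_genAbsSum_eq_zero {u : En 3} (hu : ‖u‖ = 1)
    (h : genAbsSum u = 0) :
    u = EuclideanSpace.single 2 1 ∨ u = -EuclideanSpace.single 2 1 := by
  obtain ⟨h0, h1⟩ := (add_eq_zero_iff_of_nonneg (abs_nonneg _) (abs_nonneg _)).mp h
  replace h0 : u 0 = 0 := by simpa using h0
  replace h1 : u 1 = 0 := by simpa [h0] using h1
  have hu2 : u = u 2 • EuclideanSpace.single (2 : Fin 3) (1 : ℝ) := by
    ext i
    fin_cases i <;> simp [h0, h1]
  have habs : |u 2| = 1 := by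
    rw [← hu, hu2, norm_smul, PiLp.norm_single, norm_one, mul_one, Real.norm_eq_abs, ← hu2]
  rcases abs_eq (zero_le_one' ℝ) |>.mp habs with h2 | h2
  · left; rw [hu2, h2, one_smul]
  · right; rw [hu2, h2, neg_one_smul]

theorem exists_pos_mul_norm_sq_lt_genAbsSum {δ : ℝ} (hδ : 0 < δ) :
    ∃ c > 0, ∀ v : En 3, v ≠ 0 →
      δ ≤ ‖(‖v‖⁻¹ • v) - EuclideanSpace.single (2 : Fin 3) (1 : ℝ)‖ →
      δ ≤ ‖(‖v‖⁻¹ • v) + EuclideanSpace.single (2 : Fin 3) (1 : ℝ)‖ →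
      c * ‖v‖ ^ 2 < genAbsSum v := by
  set e : En 3 := EuclideanSpace.single 2 1
  have hS : IsClosed ({u : En 3 | δ ≤ ‖u - e‖} ∩ {u | δ ≤ ‖u + e‖}) :=
    (isClosed_le continuous_const (by fun_prop)).inter (isClosed_le continuous_const (by fun_prop))
  have hpos (u : En 3) (hu : u ∈ {u : En 3 | δ ≤ ‖u - e‖} ∩ {u | δ ≤ ‖u + e‖}) (hunit : ‖u‖ = 1) :
      0 < genAbsSum u := by
    refine (by unfold genAbsSum; positivity : 0 ≤ genAbsSum u).lt_of_ne' fun h0 => ?_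
    rcases eq_single_two_or_eq_neg_of_genAbsSum_eq_zero hunit h0 with h | h <;>
      simp [h, e, hδ.not_ge] at hu
  obtain ⟨c, hc, hlt⟩ := exists_pos_mul_norm_pow_lt_of_homogeneous hS continuous_genAbsSum
    (fun t _ v => genAbsSum_smul t v) hpos
  exact ⟨c, hc, fun v hv h₁ h₂ => hlt v hv ⟨h₁, h₂⟩⟩

theorem forbidden_of_ne_single_two {ω : En 3} (h₁ : ω ≠ EuclideanSpace.single 2 1)
    (h₂ : ω ≠ -EuclideanSpace.single 2 1) :
    Forbidden 2 (jetSpan 2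
      ({(X 0 : MvPolynomial (Fin 3) ℝ) ^ 2, (X 1 : MvPolynomial (Fin 3) ℝ) ^ 2 - X 0 * X 2})) ω := by
  set e : En 3 := EuclideanSpace.single 2 1
  set δ := min ‖ω - e‖ ‖ω - -e‖ / 2 with hδ_def
  have hδ : 0 < δ := half_pos (lt_min (norm_sub_pos_iff.mpr h₁) (norm_sub_pos_iff.mpr h₂))
  obtain ⟨c, hc, hlt⟩ := exists_pos_mul_norm_sq_lt_genAbsSum hδ
  refine ⟨2, ![X 0 ^ 2, X 1 ^ 2 - X 0 * X 2], fun l => subset_jetSpan _ ?_, c, hc, δ, hδ, 1,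
    one_pos, fun x ⟨hx, _, ω', hω', hxω⟩ => ?_⟩
  · fin_cases l <;> simp
  · rw [Set.mem_singleton_iff.mp hω'] at hxω
    have hfar : δ ≤ ‖‖x‖⁻¹ • x - e‖ :=
      le_norm_sub_of_norm_sub_lt hxω (by linarith [hδ_def, min_le_left ‖ω - e‖ ‖ω - -e‖])
    have hfar' : δ ≤ ‖‖x‖⁻¹ • x - -e‖ :=
      le_norm_sub_of_norm_sub_lt hxω (by linarith [hδ_def, min_le_right ‖ω - e‖ ‖ω - -e‖])
    rw [sub_neg_eq_add] at hfar'
    simpa [Fin.sum_univ_two, evalP, genAbsSum] using hlt x (norm_pos_iff.mp hx) hfar hfar'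

/-- outside any conic neighborhood of the z-axis,
`|x²| + |y² − xz| > c(x²+y²+z²)`; consequently `Allow(⟨x², y²−xz⟩₂) ⊆ {±e₃}`. -/
theorem x2_y2xz_allowed_in_z_axis :
    (∀ δ > 0, ∃ c > 0, ∀ v : En 3, v ≠ 0 →
      δ ≤ ‖(‖v‖⁻¹ • v) - EuclideanSpace.single (2 : Fin 3) (1 : ℝ)‖ →
      δ ≤ ‖(‖v‖⁻¹ • v) + EuclideanSpace.single (2 : Fin 3) (1 : ℝ)‖ →
      c * ‖v‖ ^ 2 < |(v 0) ^ 2| + |(v 1) ^ 2 - v 0 * v 2|) ∧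
    ∀ ω : En 3, ‖ω‖ = 1 →
      Allowed 2 (jetSpan 2
        ({(X 0 : MvPolynomial (Fin 3) ℝ) ^ 2, (X 1 : MvPolynomial (Fin 3) ℝ) ^ 2 - X 0 * X 2}))
        ω →
      ω = EuclideanSpace.single (2 : Fin 3) (1 : ℝ) ∨
        ω = -EuclideanSpace.single (2 : Fin 3) (1 : ℝ) := by
  refine ⟨fun δ hδ => exists_pos_mul_norm_sq_lt_genAbsSum hδ, fun ω _ hallowed => ?_⟩
  by_contra h
  push Not at h
  exact hallowed (forbidden_of_ne_single_two h.1 h.2)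
end
end

section
/- (Whitney-negligible implies negligible.) Let U ⊂ ℝⁿ be open, Ω ⊂ S^{n−1}, and F ∈ C^m(U). Suppose that for all ε > 0 there exist δ, r > 0 and F_ε ∈ C^m(ℝⁿ \ {0}) such that Γ(Ω,δ,r) ⊂ U, |∂^α F_ε(x)| ≤ ε|x|^{m−|α|} for all x ≠ 0 and |α| ≤ m, and F_ε = F on Γ(Ω,δ,r). Then F is m-negligible for Ω: for all ε > 0 there exist δ, r > 0 with Γ(Ω,δ,r) ⊂ U such that |∂^α F(x)| ≤ ε|x|^{m−|α|} on Γ(Ω,δ,r) for |α| ≤ m, and there is a constant C₁ = C₁(m,n) with |∂^α F(x) − Σ_{|γ| ≤ m−|α|} (1/γ!)∂^{α+γ}F(y)(x−y)^γ| ≤ C₁ ε |x−y|^{m−|α|} for all distinct x, y ∈ Γ(Ω,δ,r) and |α| ≤ m. -/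
open scoped BigOperators
open MvPolynomial

noncomputable section

/-!
On the cone `Γ(Ω,δ,r)` the function `F` agrees with `F_ε`, so on this open set all their partial
derivatives agree and the pointwise bounds transfer to `F`. For the Taylor remainder
`R_α(y,x) = ∂^α F_ε(x) − Σ_γ ∂^{α+γ} F_ε(y) (x−y)^γ / γ!` there are two cases. If the segment
`[y,x]` avoids the origin, the derivative of `t ↦ R_α(y, y + t(x−y))` is `Σ_j (x−y)_j R_{α+e_j}`
at the same point, so the mean value inequality and induction on `m − |α|` give
`|R_α(y,x)| ≤ 2 n^{m−|α|} ε |x−y|^{m−|α|}`, starting from `|∂^α F_ε| ≤ ε` for `|α| = m`.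
If the segment passes through `0`, then `|x|, |y| ≤ |x−y|`, and every term of `R_α(y,x)` is
bounded separately by the pointwise estimates.
-/

open Set
open scoped Nat

section

variable {n : ℕ}

lemma abs_prod_pow_le (v : En n) (γ : Fin n → ℕ) : |∏ i, v i ^ γ i| ≤ ‖v‖ ^ mIdeg γ := by
  rw [Finset.abs_prod, mIdeg, ← Finset.prod_pow_eq_pow_sum]
  gcongr with i
  rw [abs_pow, ← Real.norm_eq_abs]
  gcongr
  exact PiLp.norm_apply_le v i

lemma norm_le_norm_sub_of_zero_mem_segment {E : Type*} [NormedAddCommGroup E] [NormedSpace ℝ E]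
    {x y : E} (h : (0 : E) ∈ segment ℝ x y) : ‖x‖ ≤ ‖x - y‖ ∧ ‖y‖ ≤ ‖x - y‖ := by
  obtain ⟨a, b, ha, hb, hab, h0⟩ := h
  have hx : x = b • (x - y) := by
    calc x = (a + b) • x - (a • x + b • y) := by rw [hab, h0, one_smul, sub_zero]
      _ = b • (x - y) := by module
  have hy : y = a • (y - x) := by
    calc y = (a + b) • y - (a • x + b • y) := by rw [hab, h0, one_smul, sub_zero]
      _ = a • (y - x) := by module
  constructor
  · calc ‖x‖ = b * ‖x - y‖ := by rw [hx, norm_smul, Real.norm_of_nonneg hb, ← hx]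
      _ ≤ ‖x - y‖ := mul_le_of_le_one_left (norm_nonneg _) (by linarith)
  · calc ‖y‖ = a * ‖x - y‖ := by rw [hy, norm_smul, Real.norm_of_nonneg ha, ← hy, norm_sub_rev]
      _ ≤ ‖x - y‖ := mul_le_of_le_one_left (norm_nonneg _) (by linarith)

lemma isOpen_coneS (Ω : Set (En n)) (δ r : ℝ) : IsOpen (coneS Ω δ r) := by
  rw [isOpen_iff_mem_nhds]
  rintro x ⟨hx0, hxr, ω, hω, hxω⟩
  have hdir : ContinuousAt (fun z : En n => ‖z‖⁻¹ • z) x :=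
    (continuous_norm.continuousAt.inv₀ hx0.ne').smul continuousAt_id
  filter_upwards [continuousAt_const.eventually_lt continuous_norm.continuousAt hx0,
    continuous_norm.continuousAt.eventually_lt continuousAt_const hxr,
    (hdir.sub continuousAt_const).norm.eventually_lt continuousAt_const hxω]
    with z hz0 hzr hzω using ⟨hz0, hzr, ω, hω, hzω⟩

end

section MultiIndex

variable {n : ℕ}

lemma mIdeg_add (α β : Fin n → ℕ) : mIdeg (α + β) = mIdeg α + mIdeg β :=
  Finset.sum_add_distrib

lemma mIdeg_single (j : Fin n) : mIdeg (Pi.single j 1 : Fin n → ℕ) = 1 := by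
  simp [mIdeg]

lemma mem_multiIdxLe {k : ℕ} {γ : Fin n → ℕ} : γ ∈ multiIdxLe n k ↔ mIdeg γ ≤ k := by
  simp only [multiIdxLe, Finset.mem_filter, Fintype.mem_piFinset, Finset.mem_range]
  refine ⟨And.right, fun h => ⟨fun i => Nat.lt_succ_of_le (le_trans ?_ h), h⟩⟩
  exact Finset.single_le_sum (fun j _ => Nat.zero_le (γ j)) (Finset.mem_univ i)

lemma multiIdxLe_mono {k l : ℕ} (h : k ≤ l) : multiIdxLe n k ⊆ multiIdxLe n l :=
  fun _ hγ => mem_multiIdxLe.2 ((mem_multiIdxLe.1 hγ).trans h)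

lemma multiIdxLe_zero : multiIdxLe n 0 = {0} := by
  ext γ
  simp [mem_multiIdxLe, mIdeg, Finset.sum_eq_zero_iff, funext_iff]

lemma sum_multiIdxLe_succ_apply_mul {k : ℕ} (j : Fin n) (f : (Fin n → ℕ) → ℝ) :
    ∑ γ ∈ multiIdxLe n (k + 1), (γ j : ℝ) * f γ =
      ∑ γ ∈ multiIdxLe n k, ((γ j : ℝ) + 1) * f (γ + Pi.single j 1) := by
  let e : (Fin n → ℕ) ↪ (Fin n → ℕ) := ⟨(· + Pi.single j 1), add_left_injective _⟩
  have hsub : (multiIdxLe n k).map e ⊆ multiIdxLe n (k + 1) := by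
    intro γ hγ
    obtain ⟨γ', hγ', rfl⟩ := Finset.mem_map.1 hγ
    rw [mem_multiIdxLe] at hγ' ⊢
    change mIdeg (γ' + Pi.single j 1) ≤ k + 1
    rw [mIdeg_add, mIdeg_single]
    omega
  have hzero : ∀ γ ∈ multiIdxLe n (k + 1), γ ∉ (multiIdxLe n k).map e → (γ j : ℝ) * f γ = 0 := by
    intro γ hγ hγe
    rw [mul_eq_zero, Nat.cast_eq_zero]
    left
    by_contra hj
    have hle : Pi.single j 1 ≤ γ := fun i => by
      rcases eq_or_ne i j with rfl | hi
      · simpa [Nat.one_le_iff_ne_zero] using hj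
      · simp [hi]
    have hdeg := congrArg mIdeg (tsub_add_cancel_of_le hle)
    rw [mIdeg_add, mIdeg_single] at hdeg
    refine hγe (Finset.mem_map.2
      ⟨γ - Pi.single j 1, mem_multiIdxLe.2 ?_, tsub_add_cancel_of_le hle⟩)
    have := mem_multiIdxLe.1 hγ
    omega
  rw [← Finset.sum_subset hsub hzero, Finset.sum_map]
  refine Finset.sum_congr rfl fun γ _ => ?_
  simp [e]

lemma prod_apply_add_single {M : Type*} [CommMonoid M] (f : Fin n → ℕ → M) (γ : Fin n → ℕ)
    (j : Fin n) :
    ∏ i, f i ((γ + Pi.single j 1 : Fin n → ℕ) i) =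
      f j (γ j + 1) * ∏ i ∈ Finset.univ.erase j, f i (γ i) := by
  rw [← Finset.mul_prod_erase _ _ (Finset.mem_univ j)]
  congr 1
  · simp
  · exact Finset.prod_congr rfl fun i hi => by simp [Finset.ne_of_mem_erase hi]

lemma prod_factorial_add_single (γ : Fin n → ℕ) (j : Fin n) :
    ∏ i, ((γ + Pi.single j 1 : Fin n → ℕ) i)! = (γ j + 1) * ∏ i, (γ i)! := by
  rw [prod_apply_add_single (fun _ k => k !), ← Finset.mul_prod_erase _ _ (Finset.mem_univ j),
    Nat.factorial_succ, mul_assoc]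

lemma prod_pow_add_single (w : Fin n → ℝ) (γ : Fin n → ℕ) (j : Fin n) :
    ∏ i, w i ^ ((γ + Pi.single j 1 : Fin n → ℕ) i) = w j * ∏ i, w i ^ γ i := by
  rw [prod_apply_add_single (fun i k => w i ^ k),
    ← Finset.mul_prod_erase _ _ (Finset.mem_univ j), _root_.pow_succ', mul_assoc]

end MultiIndex

section PartialDerivatives

variable {n : ℕ} {s : Set (En n)}

def pdList (L : List (Fin n)) (G : En n → ℝ) : En n → ℝ := L.foldr pderivE G

def mIdxList (α : Fin n → ℕ) : List (Fin n) :=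
  (List.finRange n).flatMap fun i => List.replicate (α i) i

lemma foldr_pderivE_replicate (i : Fin n) (k : ℕ) (G : En n → ℝ) :
    (List.replicate k i).foldr pderivE G = (pderivE i)^[k] G := by
  induction k with
  | zero => rfl
  | succ k ih => rw [List.replicate_succ, List.foldr_cons, ih, Function.iterate_succ_apply']

lemma pdMulti_eq_pdList (α : Fin n → ℕ) (G : En n → ℝ) :
    pdMulti α G = pdList (mIdxList α) G := by
  unfold pdMulti pdList mIdxList
  induction List.finRange n with
  | nil => rfl
  | cons i L ih =>
    rw [List.flatMap_cons, List.foldr_append, List.foldr_cons, ← ih, foldr_pderivE_replicate]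

lemma length_mIdxList (α : Fin n → ℕ) : (mIdxList α).length = mIdeg α := by
  simp [mIdxList, mIdeg, List.length_flatMap, Fin.sum_univ_def]

lemma count_mIdxList (α : Fin n → ℕ) (i : Fin n) : (mIdxList α).count i = α i := by
  simp [mIdxList, List.count_flatMap, List.count_replicate, Function.comp_def,
    ← Fin.sum_univ_def]

lemma mIdxList_add_single_perm (α : Fin n → ℕ) (j : Fin n) :
    (mIdxList (α + Pi.single j 1)).Perm (j :: mIdxList α) := by
  refine List.perm_iff_count.2 fun i => ?_
  rw [count_mIdxList, List.count_cons, count_mIdxList]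
  rcases eq_or_ne i j with rfl | h
  · simp
  · simp [h, Ne.symm h]

lemma pderivE_congr (hs : IsOpen s) {F G : En n → ℝ} (h : EqOn F G s) (i : Fin n) :
    EqOn (pderivE i F) (pderivE i G) s := fun x hx => by
  simp only [pderivE, (Filter.eventuallyEq_of_mem (hs.mem_nhds hx) h).fderiv_eq]

lemma pdList_congr (hs : IsOpen s) {F G : En n → ℝ} (h : EqOn F G s) :
    ∀ L : List (Fin n), EqOn (pdList L F) (pdList L G) s
  | [] => h
  | i :: L => pderivE_congr hs (pdList_congr hs h L) i

lemma pdMulti_congr (hs : IsOpen s) {F G : En n → ℝ} (h : EqOn F G s) (α : Fin n → ℕ) :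
    EqOn (pdMulti α F) (pdMulti α G) s := by
  simpa only [pdMulti_eq_pdList] using pdList_congr hs h (mIdxList α)

lemma contDiffOn_pderivE (hs : IsOpen s) {G : En n → ℝ} {k : ℕ}
    (hG : ContDiffOn ℝ (k + 1 : ℕ) G s) (i : Fin n) : ContDiffOn ℝ k (pderivE i G) s :=
  (hG.fderiv_of_isOpen hs (by norm_cast)).clm_apply contDiffOn_const

lemma contDiffOn_pdList (hs : IsOpen s) {G : En n → ℝ} :
    ∀ (L : List (Fin n)) {k : ℕ}, ContDiffOn ℝ (k + L.length : ℕ) G s →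
      ContDiffOn ℝ k (pdList L G) s
  | [], _, hG => hG
  | i :: L, k, hG => by
    refine contDiffOn_pderivE hs (contDiffOn_pdList hs L ?_) i
    rwa [List.length_cons, ← add_assoc, add_right_comm] at hG

lemma contDiffOn_pdMulti (hs : IsOpen s) {G : En n → ℝ} {α : Fin n → ℕ} {k : ℕ}
    (hG : ContDiffOn ℝ (k + mIdeg α : ℕ) G s) : ContDiffOn ℝ k (pdMulti α G) s := by
  rw [pdMulti_eq_pdList]
  exact contDiffOn_pdList hs _ (by rwa [length_mIdxList])

lemma pderivE_comm (hs : IsOpen s) {G : En n → ℝ} (hG : ContDiffOn ℝ 2 G s) (i j : Fin n)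
    {x : En n} (hx : x ∈ s) : pderivE i (pderivE j G) x = pderivE j (pderivE i G) x := by
  have hdiff : DifferentiableAt ℝ (fderiv ℝ G) x :=
    ((hG.fderiv_of_isOpen (m := 1) hs (by norm_num)).differentiableOn
      one_ne_zero).differentiableAt (hs.mem_nhds hx)
  have hsymm := (hG.contDiffAt (hs.mem_nhds hx)).isSymmSndFDerivAt (by simp)
  have hsnd : ∀ a b : Fin n, pderivE a (pderivE b G) x =
      fderiv ℝ (fderiv ℝ G) x (EuclideanSpace.single a 1) (EuclideanSpace.single b 1) := by
    intro a b
    change fderiv ℝ (fun z => fderiv ℝ G z (EuclideanSpace.single b 1)) x _ = _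
    rw [fderiv_clm_apply hdiff (differentiableAt_const _)]
    simp
  rw [hsnd, hsnd, hsymm]

lemma pdList_perm (hs : IsOpen s) {L L' : List (Fin n)} (hp : L.Perm L') {G : En n → ℝ}
    (hG : ContDiffOn ℝ L.length G s) : EqOn (pdList L G) (pdList L' G) s := by
  induction hp generalizing G with
  | nil => exact fun _ _ => rfl
  | cons i _ ih => exact pderivE_congr hs (ih (hG.of_le (by simp))) i
  | swap a b L =>
    have hlen : (2 + L.length : ℕ) = (b :: a :: L).length := by simp; omega
    exact fun x hx => pderivE_comm hs (contDiffOn_pdList hs L (hlen ▸ hG)) b a hx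
  | trans h₁ _ ih₁ ih₂ => exact (ih₁ hG).trans (ih₂ (h₁.length_eq ▸ hG))

lemma pderivE_pdMulti (hs : IsOpen s) {G : En n → ℝ} {m : ℕ} (hG : ContDiffOn ℝ m G s)
    {α : Fin n → ℕ} (hα : mIdeg α < m) (j : Fin n) :
    EqOn (pderivE j (pdMulti α G)) (pdMulti (α + Pi.single j 1) G) s := by
  rw [pdMulti_eq_pdList, pdMulti_eq_pdList]
  refine (pdList_perm hs (mIdxList_add_single_perm α j) (hG.of_le ?_)).symm
  rw [length_mIdxList, mIdeg_add, mIdeg_single]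
  exact_mod_cast hα

lemma fderiv_apply_eq_sum_pderivE (G : En n → ℝ) (x v : En n) :
    fderiv ℝ G x v = ∑ j, v j * pderivE j G x := by
  conv_lhs => rw [← (EuclideanSpace.basisFun (Fin n) ℝ).sum_repr v]
  simp [pderivE]

lemma hasDerivAt_pdMulti_line (hs : IsOpen s) {G : En n → ℝ} {m : ℕ} (hG : ContDiffOn ℝ m G s)
    {α : Fin n → ℕ} (hα : mIdeg α < m) {y v : En n} {t : ℝ} (ht : y + t • v ∈ s) :
    HasDerivAt (fun u : ℝ => pdMulti α G (y + u • v))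
      (∑ j, v j * pdMulti (α + Pi.single j 1) G (y + t • v)) t := by
  have hdiff : DifferentiableAt ℝ (pdMulti α G) (y + t • v) :=
    ((contDiffOn_pdMulti hs (k := 1) (hG.of_le (by norm_cast; omega))).differentiableOn
      one_ne_zero).differentiableAt (hs.mem_nhds ht)
  have hline : HasDerivAt (fun u : ℝ => y + u • v) v t := by
    simpa using ((hasDerivAt_id t).smul_const v).const_add y
  refine (hdiff.hasFDerivAt.comp_hasDerivAt t hline).congr_deriv ?_
  rw [fderiv_apply_eq_sum_pderivE]
  exact Finset.sum_congr rfl fun j _ => by rw [pderivE_pdMulti hs hG hα j ht]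

end PartialDerivatives

section Taylor

variable {n : ℕ}

def taylorRemainder (m : ℕ) (G : En n → ℝ) (α : Fin n → ℕ) (y x : En n) : ℝ :=
  pdMulti α G x - taylorSum m G α y x

lemma taylorSum_congr {F G : En n → ℝ} {y : En n} (h : ∀ β, pdMulti β F y = pdMulti β G y)
    (m : ℕ) (α : Fin n → ℕ) (x : En n) : taylorSum m F α y x = taylorSum m G α y x := by
  simp only [taylorSum, h]

lemma taylorSum_self (m : ℕ) (G : En n → ℝ) (α : Fin n → ℕ) (y : En n) :
    taylorSum m G α y y = pdMulti α G y := by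
  rw [taylorSum, Finset.sum_eq_single_of_mem 0 (mem_multiIdxLe.2 (by simp [mIdeg]))]
  · simp
  · intro γ _ hγ
    obtain ⟨i, hi⟩ : ∃ i, γ i ≠ 0 := by
      by_contra! h
      exact hγ (funext h)
    exact mul_eq_zero_of_right _ (Finset.prod_eq_zero (Finset.mem_univ i) (by simp [hi]))

lemma taylorSum_of_mIdeg_eq {m : ℕ} {α : Fin n → ℕ} (hα : mIdeg α = m) (G : En n → ℝ)
    (y x : En n) : taylorSum m G α y x = pdMulti α G y := by
  simp [taylorSum, hα, multiIdxLe_zero]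

lemma taylorSum_line (m : ℕ) (G : En n → ℝ) (α : Fin n → ℕ) (y v : En n) (t : ℝ) :
    taylorSum m G α y (y + t • v) = ∑ γ ∈ multiIdxLe n (m - mIdeg α),
      ((∏ i, (γ i)! : ℕ) : ℝ)⁻¹ * pdMulti (α + γ) G y * (∏ i, v i ^ γ i) * t ^ mIdeg γ := by
  refine Finset.sum_congr rfl fun γ _ => ?_
  simp only [PiLp.add_apply, PiLp.smul_apply, smul_eq_mul, add_sub_cancel_left, mul_pow,
    Finset.prod_mul_distrib, Finset.prod_pow_eq_pow_sum, mIdeg,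
    show (fun i => α i + γ i) = α + γ from rfl]
  ring

lemma hasDerivAt_taylorSum_line {m : ℕ} {α : Fin n → ℕ} (hα : mIdeg α < m) (G : En n → ℝ)
    (y v : En n) (t : ℝ) :
    HasDerivAt (fun u : ℝ => taylorSum m G α y (y + u • v))
      (∑ j, v j * taylorSum m G (α + Pi.single j 1) y (y + t • v)) t := by
  obtain ⟨k, hk⟩ : ∃ k, m - mIdeg α = k + 1 := ⟨m - mIdeg α - 1, by omega⟩
  have hkj : ∀ j, m - mIdeg (α + Pi.single j 1) = k := fun j => by
    rw [mIdeg_add, mIdeg_single]; omega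
  set c : (Fin n → ℕ) → ℝ := fun γ =>
    ((∏ i, (γ i)! : ℕ) : ℝ)⁻¹ * pdMulti (α + γ) G y * ∏ i, v i ^ γ i
  simp_rw [taylorSum_line, hk, hkj]
  refine (HasDerivAt.fun_sum fun γ _ =>
    (hasDerivAt_pow (mIdeg γ) t).const_mul (c γ)).congr_deriv ?_
  have hsplit : ∀ γ : Fin n → ℕ, c γ * (mIdeg γ * t ^ (mIdeg γ - 1)) =
      ∑ j, (γ j : ℝ) * (c γ * t ^ (mIdeg γ - 1)) := fun γ => by
    rw [← Finset.sum_mul, mIdeg, Nat.cast_sum]; ring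
  rw [Finset.sum_congr rfl fun γ _ => hsplit γ, Finset.sum_comm]
  refine Finset.sum_congr rfl fun j _ => ?_
  rw [sum_multiIdxLe_succ_apply_mul, Finset.mul_sum]
  refine Finset.sum_congr rfl fun γ _ => ?_
  simp only [c, prod_factorial_add_single, prod_pow_add_single, mIdeg_add, mIdeg_single,
    Nat.add_sub_cancel, add_comm (Pi.single j 1) γ, add_assoc]
  field_simp
  push_cast
  ring

end Taylor

section Remainder

variable {n : ℕ}

lemma hasDerivAt_taylorRemainder_line {s : Set (En n)} (hs : IsOpen s) {G : En n → ℝ} {m : ℕ}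
    (hG : ContDiffOn ℝ m G s) {α : Fin n → ℕ} (hα : mIdeg α < m) {y v : En n} {t : ℝ}
    (ht : y + t • v ∈ s) :
    HasDerivAt (fun u : ℝ => taylorRemainder m G α y (y + u • v))
      (∑ j, v j * taylorRemainder m G (α + Pi.single j 1) y (y + t • v)) t := by
  refine ((hasDerivAt_pdMulti_line hs hG hα ht).sub
    (hasDerivAt_taylorSum_line hα G y v t)).congr_deriv ?_
  simp only [taylorRemainder, mul_sub, Finset.sum_sub_distrib]

theorem abs_taylorRemainder_le_of_segment_subset {s : Set (En n)} (hs : IsOpen s)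
    {G : En n → ℝ} {m : ℕ} (hG : ContDiffOn ℝ m G s) {M : ℝ} (hM₀ : 0 ≤ M)
    (hM : ∀ z ∈ s, ∀ β, mIdeg β = m → |pdMulti β G z| ≤ M) (y : En n) (k : ℕ) :
    ∀ α x, mIdeg α + k = m → segment ℝ y x ⊆ s →
      |taylorRemainder m G α y x| ≤ 2 * n ^ k * M * ‖x - y‖ ^ k := by
  induction k with
  | zero =>
    intro α x hα hseg
    rw [taylorRemainder, taylorSum_of_mIdeg_eq hα]
    calc _ ≤ |pdMulti α G x| + |pdMulti α G y| := abs_sub _ _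
      _ ≤ M + M := add_le_add (hM x (hseg (right_mem_segment ℝ y x)) α hα)
          (hM y (hseg (left_mem_segment ℝ y x)) α hα)
      _ = _ := by ring
  | succ k ih =>
    intro α x hα hseg
    set v := x - y
    have hpt : ∀ t ∈ Icc (0 : ℝ) 1, y + t • v ∈ segment ℝ y x := fun t ht => by
      rw [segment_eq_image']
      exact ⟨t, ht, rfl⟩
    have hderiv : ∀ t ∈ Icc (0 : ℝ) 1,
        ‖∑ j, v j * taylorRemainder m G (α + Pi.single j 1) y (y + t • v)‖ ≤
          2 * n ^ (k + 1) * M * ‖v‖ ^ (k + 1) := by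
      intro t ht
      have hterm : ∀ j, |taylorRemainder m G (α + Pi.single j 1) y (y + t • v)| ≤
          2 * n ^ k * M * ‖v‖ ^ k := fun j => by
        refine (ih _ _ (by rw [mIdeg_add, mIdeg_single]; omega)
          (((convex_segment y x).segment_subset (left_mem_segment ℝ y x) (hpt t ht)).trans
            hseg)).trans ?_
        rw [add_sub_cancel_left, norm_smul, Real.norm_of_nonneg ht.1]
        gcongr
        · exact mul_nonneg ht.1 (norm_nonneg v)
        · exact mul_le_of_le_one_left (norm_nonneg v) ht.2
      calc _ ≤ ∑ j, |v j| * |taylorRemainder m G (α + Pi.single j 1) y (y + t • v)| := by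
            rw [Real.norm_eq_abs]
            exact (Finset.abs_sum_le_sum_abs _ _).trans_eq (by simp only [abs_mul])
        _ ≤ ∑ _j : Fin n, ‖v‖ * (2 * n ^ k * M * ‖v‖ ^ k) := by
            gcongr with j
            · exact (Real.norm_eq_abs _).symm.trans_le (PiLp.norm_apply_le v j)
            · exact hterm j
        _ = _ := by
            simp only [Finset.sum_const, Finset.card_univ, Fintype.card_fin, nsmul_eq_mul]
            ring
    have hmvt := norm_image_sub_le_of_norm_deriv_le_segment_01'
      (fun t ht => (hasDerivAt_taylorRemainder_line hs hG (by omega)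
        (hseg (hpt t ht))).hasDerivWithinAt)
      (fun t ht => hderiv t (Ico_subset_Icc_self ht))
    simpa [taylorRemainder, taylorSum_self, v] using hmvt

lemma abs_taylorRemainder_le_of_norm_le_norm_sub {s : Set (En n)} {G : En n → ℝ} {m : ℕ}
    {ε : ℝ} (hε : 0 ≤ ε)
    (hG : ∀ z ∈ s, ∀ β, mIdeg β ≤ m → |pdMulti β G z| ≤ ε * ‖z‖ ^ (m - mIdeg β))
    {x y : En n} (hxs : x ∈ s) (hys : y ∈ s) (hx : ‖x‖ ≤ ‖x - y‖) (hy : ‖y‖ ≤ ‖x - y‖)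
    {α : Fin n → ℕ} (hα : mIdeg α ≤ m) :
    |taylorRemainder m G α y x| ≤
      ((multiIdxLe n (m - mIdeg α)).card + 1) * ε * ‖x - y‖ ^ (m - mIdeg α) := by
  set K := m - mIdeg α
  have hterm : ∀ γ ∈ multiIdxLe n K, |((∏ i, (γ i)! : ℕ) : ℝ)⁻¹ *
      pdMulti (fun i => α i + γ i) G y * ∏ i, (x i - y i) ^ γ i| ≤ ε * ‖x - y‖ ^ K := by
    intro γ hγ
    have hγK := mem_multiIdxLe.1 hγ
    have hfact : |((∏ i, (γ i)! : ℕ) : ℝ)⁻¹| ≤ 1 := by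
      rw [abs_inv, Nat.abs_cast]
      exact inv_le_one_of_one_le₀
        (by exact_mod_cast Finset.prod_pos fun i _ => (γ i).factorial_pos)
    have hpd : |pdMulti (α + γ) G y| ≤ ε * ‖x - y‖ ^ (K - mIdeg γ) := by
      refine (hG y hys _ (by rw [mIdeg_add]; omega)).trans ?_
      rw [mIdeg_add, Nat.sub_add_eq]
      gcongr
    calc _ = |((∏ i, (γ i)! : ℕ) : ℝ)⁻¹| * |pdMulti (α + γ) G y| *
          |∏ i, (x - y) i ^ γ i| := by
          simp only [abs_mul, PiLp.sub_apply]
          rfl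
      _ ≤ 1 * (ε * ‖x - y‖ ^ (K - mIdeg γ)) * ‖x - y‖ ^ mIdeg γ := by
          gcongr
          exact abs_prod_pow_le (x - y) γ
      _ = ε * ‖x - y‖ ^ K := by rw [one_mul, mul_assoc, ← pow_add, Nat.sub_add_cancel hγK]
  have hsum : |taylorSum m G α y x| ≤ (multiIdxLe n K).card * (ε * ‖x - y‖ ^ K) := by
    refine (Finset.abs_sum_le_sum_abs _ _).trans ?_
    simpa using Finset.sum_le_sum hterm
  calc _ ≤ |pdMulti α G x| + |taylorSum m G α y x| := abs_sub _ _
    _ ≤ ε * ‖x - y‖ ^ K + (multiIdxLe n K).card * (ε * ‖x - y‖ ^ K) := by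
        gcongr
        exact (hG x hxs α hα).trans (by gcongr)
    _ = _ := by ring

theorem exists_abs_taylorRemainder_le (n m : ℕ) :
    ∃ C > 0, ∀ {G : En n → ℝ} {ε : ℝ}, 0 ≤ ε → ContDiffOn ℝ m G {z | z ≠ 0} →
      (∀ z ≠ 0, ∀ β, mIdeg β ≤ m → |pdMulti β G z| ≤ ε * ‖z‖ ^ (m - mIdeg β)) →
      ∀ x ≠ 0, ∀ y ≠ 0, ∀ α, mIdeg α ≤ m →
        |taylorRemainder m G α y x| ≤ C * ε * ‖x - y‖ ^ (m - mIdeg α) := by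
  refine ⟨2 * (n + 1) ^ m + (multiIdxLe n m).card + 1, by positivity, ?_⟩
  intro G ε hε hG hbound x hx y hy α hα
  by_cases h0 : (0 : En n) ∈ segment ℝ y x
  · obtain ⟨hyn, hxn⟩ := norm_le_norm_sub_of_zero_mem_segment h0
    rw [norm_sub_rev] at hyn hxn
    refine (abs_taylorRemainder_le_of_norm_le_norm_sub hε hbound hx hy hxn hyn hα).trans ?_
    gcongr
    have hcard : ((multiIdxLe n (m - mIdeg α)).card : ℝ) ≤ (multiIdxLe n m).card := by
      exact_mod_cast Finset.card_le_card (multiIdxLe_mono (Nat.sub_le m (mIdeg α)))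
    have : (0 : ℝ) ≤ 2 * (n + 1) ^ m := by positivity
    linarith
  · have hseg : segment ℝ y x ⊆ {z | z ≠ 0} := fun z hz hz0 => h0 (hz0 ▸ hz)
    have htop : ∀ z ∈ {z : En n | z ≠ 0}, ∀ β, mIdeg β = m → |pdMulti β G z| ≤ ε :=
      fun z hz β hβ => by simpa [hβ] using hbound z hz β hβ.le
    refine (abs_taylorRemainder_le_of_segment_subset isOpen_ne hG hε htop y (m - mIdeg α) α x
      (by omega) hseg).trans ?_
    gcongr
    have hpow : (n : ℝ) ^ (m - mIdeg α) ≤ (n + 1) ^ m :=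
      (pow_le_pow_left₀ n.cast_nonneg (by linarith) _).trans
        (pow_le_pow_right₀ (by linarith) (Nat.sub_le m _))
    have : (0 : ℝ) ≤ (multiIdxLe n m).card := Nat.cast_nonneg _
    linarith

end Remainder

theorem whitneyNegligible_implies_negligible_general {n m : ℕ} (U : Set (En n)) (Ω : Set (En n))
    (F : En n → ℝ) (hW : WhitneyNegligible m U Ω F) :
    ∃ C₁ > 0, ∀ ε > 0, ∃ δ > 0, ∃ r > 0,
      coneS Ω δ r ⊆ U ∧
      (∀ x ∈ coneS Ω δ r, ∀ α : Fin n → ℕ, mIdeg α ≤ m →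
        |pdMulti α F x| ≤ ε * ‖x‖ ^ (m - mIdeg α)) ∧
      (∀ x ∈ coneS Ω δ r, ∀ y ∈ coneS Ω δ r, x ≠ y → ∀ α : Fin n → ℕ, mIdeg α ≤ m →
        |pdMulti α F x - taylorSum m F α y x| ≤ C₁ * ε * ‖x - y‖ ^ (m - mIdeg α)) := by
  obtain ⟨C₁, hC₁, hrem⟩ := exists_abs_taylorRemainder_le n m
  refine ⟨C₁, hC₁, fun ε hε => ?_⟩
  obtain ⟨δ, hδ, r, hr, Fε, hsub, hFε, hbound, heq⟩ := hW ε hε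
  have hpd (α : Fin n → ℕ) : EqOn (pdMulti α F) (pdMulti α Fε) (coneS Ω δ r) :=
    pdMulti_congr (isOpen_coneS Ω δ r) (fun x hx => (heq x hx).symm) α
  have hne : ∀ x ∈ coneS Ω δ r, x ≠ 0 := fun x hx => norm_pos_iff.1 hx.1
  refine ⟨δ, hδ, r, hr, hsub, fun x hx α hα => ?_, fun x hx y hy _ α hα => ?_⟩
  · rw [hpd α hx]
    exact hbound x (hne x hx) α hα
  · rw [hpd α hx, taylorSum_congr (fun β => hpd β hy)]
    exact hrem hε.le (by exact_mod_cast hFε) hbound x (hne x hx) y (hne y hy) α hα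

/-- Whitney-negligible implies negligible (with a constant `C₁ = C₁(m,n)`
in the Taylor remainder estimate). -/
theorem whitneyNegligible_implies_negligible {n m : ℕ} (U : Set (En n)) (hU : IsOpen U)
    (Ω : Set (En n)) (hΩ : Ω ⊆ Metric.sphere (0 : En n) 1)
    (F : En n → ℝ) (hF : ContDiffOn ℝ (m : ℕ∞) F U)
    (hW : WhitneyNegligible m U Ω F) :
    ∃ C₁ > 0, ∀ ε > 0, ∃ δ > 0, ∃ r > 0,
      coneS Ω δ r ⊆ U ∧
      (∀ x ∈ coneS Ω δ r, ∀ α : Fin n → ℕ, mIdeg α ≤ m →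
        |pdMulti α F x| ≤ ε * ‖x‖ ^ (m - mIdeg α)) ∧
      (∀ x ∈ coneS Ω δ r, ∀ y ∈ coneS Ω δ r, x ≠ y → ∀ α : Fin n → ℕ, mIdeg α ≤ m →
        |pdMulti α F x - taylorSum m F α y x| ≤ C₁ * ε * ‖x - y‖ ^ (m - mIdeg α)) :=
  whitneyNegligible_implies_negligible_general U Ω F hW
end
end
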